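/- Fix an integer N ≥ 1, real numbers y_1, …, y_N, and positive real numbers σ_1, …, σ_N. Define, for (μ_0, τ_0) ∈ ℝ × (1, ∞), c(μ_0, τ_0) := ∫_1^{τ_0} ∫_1^5 (∏_{i=1}^N (σ_i² + k² τ²)^(−1/2)) · (1/τ) · [∫_{−∞}^{+∞} exp(−(1/2) Σ_{i=1}^N (y_i − μ)²/(σ_i² + k² τ²)) · exp(−(1/2)(μ − μ_0)²/τ²) dμ] dk dτ. Then the function (μ_0, τ_0) ↦ c(μ_0, τ_0) is continuous on the rectangle [−8, 68] × [5, 16]. -/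

import Mathlib

/-!
Completing the square in `μ`, the inner integral is the Gaussian integral
`∫ exp (-a μ² + b μ + c) dμ = √(π / a) exp (b² / 4a + c)`, where `a > 0` because the prior
contributes the precision `1 / τ²`. The resulting closed form is continuous in `(μ₀, τ, k)`
wherever `τ > 0`, so after clamping `τ` to `[1, ∞)` (which changes nothing on the range of
integration) the two outer integrals are parametric integrals of a continuous function.
-/

open Real MeasureTheory

theorem integral_exp_neg_mul_sq_add_mul_add {a : ℝ} (ha : 0 < a) (b c : ℝ) :
    ∫ x : ℝ, exp (-a * x ^ 2 + b * x + c) = √(π / a) * exp (b ^ 2 / (4 * a) + c) := by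
  have hsq (x : ℝ) :
      -a * x ^ 2 + b * x + c = -a * (x - b / (2 * a)) ^ 2 + (b ^ 2 / (4 * a) + c) := by
    field_simp
    ring
  simp_rw [hsq, exp_add, integral_mul_const,
    integral_sub_right_eq_self (fun x => exp (-a * x ^ 2)), integral_gaussian]

section GaussianProduct

variable {ι : Type*} [Fintype ι]

theorem sum_sub_sq_div_eq_quadratic (y v : ι → ℝ) (μ : ℝ) :
    ∑ i, (y i - μ) ^ 2 / v i =
      (∑ i, (v i)⁻¹) * μ ^ 2 - 2 * (∑ i, y i / v i) * μ + ∑ i, y i ^ 2 / v i := by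
  simp only [Finset.sum_mul, Finset.mul_sum, ← Finset.sum_sub_distrib, ← Finset.sum_add_distrib]
  exact Finset.sum_congr rfl fun i _ => by ring

/-- `a` is half the posterior precision of `μ`, and `-a μ² + b μ + c` is the exponent of the
integrand of `integral_exp_sum_sq_div_mul_exp_sq_div`. -/
noncomputable def gaussianProductIntegral (y v : ι → ℝ) (m t : ℝ) : ℝ :=
  let a := (∑ i, (v i)⁻¹ + t⁻¹) / 2
  let b := ∑ i, y i / v i + m / t
  let c := -(∑ i, y i ^ 2 / v i + m ^ 2 / t) / 2
  √(π / a) * exp (b ^ 2 / (4 * a) + c)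

theorem integral_exp_sum_sq_div_mul_exp_sq_div (y : ι → ℝ) {v : ι → ℝ} (hv : ∀ i, 0 ≤ v i)
    (m : ℝ) {t : ℝ} (ht : 0 < t) :
    ∫ μ : ℝ, exp (-(1/2) * ∑ i, (y i - μ) ^ 2 / v i) * exp (-(1/2) * (μ - m) ^ 2 / t) =
      gaussianProductIntegral y v m t := by
  have ha : 0 < (∑ i, (v i)⁻¹ + t⁻¹) / 2 := by
    have := Finset.sum_nonneg fun i (_ : i ∈ Finset.univ) => inv_nonneg.2 (hv i)
    positivity
  have hexp (μ : ℝ) : -(1/2) * ∑ i, (y i - μ) ^ 2 / v i + -(1/2) * (μ - m) ^ 2 / t =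
      -((∑ i, (v i)⁻¹ + t⁻¹) / 2) * μ ^ 2 + (∑ i, y i / v i + m / t) * μ
        + -(∑ i, y i ^ 2 / v i + m ^ 2 / t) / 2 := by
    rw [sum_sub_sq_div_eq_quadratic]
    field_simp
    ring
  simp_rw [← exp_add, hexp]
  exact integral_exp_neg_mul_sq_add_mul_add ha _ _

theorem Continuous.gaussianProductIntegral {X : Type*} [TopologicalSpace X] (y : ι → ℝ)
    {v : X → ι → ℝ} {m t : X → ℝ} (hv : Continuous v) (hm : Continuous m) (ht : Continuous t)
    (hv0 : ∀ x i, 0 < v x i) (ht0 : ∀ x, 0 < t x) :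
    Continuous fun x => gaussianProductIntegral y (v x) (m x) (t x) := by
  have hv' (i : ι) (x : X) : v x i ≠ 0 := (hv0 x i).ne'
  have ht' (x : X) : t x ≠ 0 := (ht0 x).ne'
  have ha (x : X) : (∑ i, (v x i)⁻¹ + (t x)⁻¹) / 2 ≠ 0 := by
    have := Finset.sum_nonneg fun i (_ : i ∈ Finset.univ) => (inv_pos.2 (hv0 x i)).le
    have := ht0 x
    positivity
  have ha4 (x : X) : 4 * ((∑ i, (v x i)⁻¹ + (t x)⁻¹) / 2) ≠ 0 := mul_ne_zero four_ne_zero (ha x)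
  dsimp only [_root_.gaussianProductIntegral]
  fun_prop (disch := first | assumption | exact hv' _)

end GaussianProduct

theorem norm_const_continuousOn_general (N : ℕ) (y σ : Fin N → ℝ)
    (hσ : ∀ i, 0 < σ i) :
    ContinuousOn (fun p : ℝ × ℝ =>
      ∫ τ in (1:ℝ)..p.2, ∫ k in (1:ℝ)..(5:ℝ),
        (∏ i, (σ i ^ 2 + k ^ 2 * τ ^ 2) ^ (-(1:ℝ)/2)) * (1 / τ) *
          ∫ μ : ℝ, Real.exp (-(1/2) * ∑ i, (y i - μ) ^ 2 / (σ i ^ 2 + k ^ 2 * τ ^ 2)) *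
            Real.exp (-(1/2) * (μ - p.1) ^ 2 / τ ^ 2))
      (Set.Icc (-8 : ℝ) 68 ×ˢ Set.Icc (5 : ℝ) 16) := by
  have hD (τ k : ℝ) (i : Fin N) : 0 < σ i ^ 2 + k ^ 2 * τ ^ 2 := by have := hσ i; positivity
  let F : ℝ × ℝ × ℝ → ℝ := fun q =>
    (∏ i, (σ i ^ 2 + q.2.2 ^ 2 * max 1 q.2.1 ^ 2) ^ (-(1:ℝ)/2)) * (1 / max 1 q.2.1) *
      gaussianProductIntegral y (fun i => σ i ^ 2 + q.2.2 ^ 2 * max 1 q.2.1 ^ 2) q.1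
        (max 1 q.2.1 ^ 2)
  have hF : Continuous F := by
    have hτ (q : ℝ × ℝ × ℝ) : 0 < max 1 q.2.1 := lt_max_of_lt_left one_pos
    refine .mul (.mul ?_ ?_) (.gaussianProductIntegral y (by fun_prop) (by fun_prop) (by fun_prop)
      (fun q i => hD _ _ i) fun q => by positivity)
    · exact continuous_finsetProd _ fun i _ =>
        (by fun_prop : Continuous _).rpow_const fun q => .inl (hD _ _ i).ne'
    · exact continuous_const.div (by fun_prop) fun q => (hτ q).ne'
  have hc : Continuous fun p : ℝ × ℝ => ∫ τ in (1:ℝ)..p.2, ∫ k in (1:ℝ)..5, F (p.1, τ, k) := by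
    fun_prop
  refine hc.continuousOn.congr fun p hp => intervalIntegral.integral_congr fun τ hτ =>
    intervalIntegral.integral_congr fun k _ => ?_
  have hτ1 : 1 ≤ τ := by
    rw [Set.uIcc_of_le (by linarith [hp.2.1])] at hτ
    exact hτ.1
  simp only [F, max_eq_right hτ1,
    integral_exp_sum_sq_div_mul_exp_sq_div y (fun i => (hD τ k i).le) _ (by positivity : 0 < τ ^ 2)]

/-- Continuity of the normalization constant `c(μ₀, τ₀)` of the posterior of the
linear random effects model on the rectangle `[-8, 68] × [5, 16]`. -/
theorem norm_const_continuousOn (N : ℕ) (hN : 1 ≤ N) (y σ : Fin N → ℝ)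
    (hσ : ∀ i, 0 < σ i) :
    ContinuousOn (fun p : ℝ × ℝ =>
      ∫ τ in (1:ℝ)..p.2, ∫ k in (1:ℝ)..(5:ℝ),
        (∏ i, (σ i ^ 2 + k ^ 2 * τ ^ 2) ^ (-(1:ℝ)/2)) * (1 / τ) *
          ∫ μ : ℝ, Real.exp (-(1/2) * ∑ i, (y i - μ) ^ 2 / (σ i ^ 2 + k ^ 2 * τ ^ 2)) *
            Real.exp (-(1/2) * (μ - p.1) ^ 2 / τ ^ 2))
      (Set.Icc (-8 : ℝ) 68 ×ˢ Set.Icc (5 : ℝ) 16) :=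
  norm_const_continuousOn_general N y σ hσ
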